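/- Let d ≥ 1, let Σ be a d×d complex Hermitian positive definite matrix with positive definite square root Σ^{1/2}, and let X be a d×d complex Hermitian positive definite matrix such that (Σ^{1/2} R Σ^{-1/2}) X (Σ^{1/2} R Σ^{-1/2})* = X for every R ∈ SU(d), where * denotes conjugate transpose. Then there exists a real number c > 0 such that X = c • Σ. -/

import Mathlib

/-!
Put `Q = Σ^{1/2}` and write `X = Q Y Q`. Since `Q` is Hermitian and invertible, `X` is fixed by
`Q R Q⁻¹` exactly when `R Y R* = Y`, i.e. when `Y` commutes with the unitary `R`. Every unitary
is a unimodular scalar multiple of an element of `SU(d)` (take a `d`-th root of its determinant),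
and the unitaries span the C⋆-algebra of all matrices, so `Y` is central, hence scalar:
`Y = c • 1` with `c > 0` because `Y` is positive definite. Then `X = c • Q Q = c • Σ`.
-/

open Matrix
open scoped ComplexOrder

open scoped Classical in
/-- The positive semidefinite square root of a complex matrix, extended to a total function
(junk value `0` when the matrix is not positive semidefinite). -/
noncomputable def matSqrt {d : ℕ} (A : Matrix (Fin d) (Fin d) ℂ) : Matrix (Fin d) (Fin d) ℂ :=
  if hA : A.PosSemidef then
    (hA.1.eigenvectorUnitary : Matrix (Fin d) (Fin d) ℂ) *
      diagonal ((↑) ∘ (fun x : ℝ => Real.sqrt x) ∘ hA.1.eigenvalues) *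
      (star hA.1.eigenvectorUnitary : Matrix (Fin d) (Fin d) ℂ)
  else 0

section MatSqrt

variable {d : ℕ} {A : Matrix (Fin d) (Fin d) ℂ}

lemma matSqrt_eq_cfc (hA : A.PosSemidef) : matSqrt A = cfc Real.sqrt A := by
  rw [matSqrt, dif_pos hA, hA.1.cfc_eq, IsHermitian.cfc, Unitary.conjStarAlgAut_apply]
  rfl

lemma isHermitian_matSqrt (hA : A.PosSemidef) : (matSqrt A).IsHermitian := by
  rw [matSqrt_eq_cfc hA]
  exact cfc_predicate _ _

lemma matSqrt_mul_self (hA : A.PosSemidef) : matSqrt A * matSqrt A = A := by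
  rw [matSqrt_eq_cfc hA, ← cfc_mul Real.sqrt Real.sqrt A]
  conv_rhs => rw [← cfc_id' ℝ A hA.1]
  refine cfc_congr fun x hx => Real.mul_self_sqrt ?_
  rw [hA.1.spectrum_real_eq_range_eigenvalues] at hx
  obtain ⟨i, rfl⟩ := hx
  exact hA.eigenvalues_nonneg i

end MatSqrt

section Conjugation

variable {n α : Type*} [Fintype n] [DecidableEq n] [CommRing α] [StarRing α]

lemma Matrix.IsHermitian.conj_by_similar {Q : Matrix n n α} (hQ : Q.IsHermitian)
    (hdet : IsUnit Q.det) (R Y : Matrix n n α) :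
    (Q * R * Q⁻¹) * (Q * Y * Q) * (Q * R * Q⁻¹)ᴴ = Q * (R * Y * Rᴴ) * Q := by
  rw [conjTranspose_mul, conjTranspose_mul, conjTranspose_nonsing_inv, hQ.eq]
  simp only [Matrix.mul_assoc, nonsing_inv_mul_cancel_left _ _ hdet,
    mul_nonsing_inv_cancel_left _ _ hdet]

lemma Matrix.IsHermitian.commute_of_conj_by_similar_eq {Q R Y : Matrix n n α}
    (hQ : Q.IsHermitian) (hdet : IsUnit Q.det) (hR : R ∈ unitaryGroup n α)
    (h : (Q * R * Q⁻¹) * (Q * Y * Q) * (Q * R * Q⁻¹)ᴴ = Q * Y * Q) : Commute R Y := by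
  have hQunit : IsUnit Q := (isUnit_iff_isUnit_det Q).mpr hdet
  rw [hQ.conj_by_similar hdet] at h
  exact (commute_unitary_iff_star_right_conjugate hR).mpr <| hQunit.mul_right_cancel <|
    hQunit.mul_left_cancel (by simpa only [Matrix.mul_assoc, star_eq_conjTranspose] using h)

end Conjugation

section Centralizer

variable {n : Type*} [Fintype n] [DecidableEq n]

lemma exists_smul_mem_specialUnitaryGroup {U : Matrix n n ℂ} (hU : U ∈ unitaryGroup n ℂ) :
    ∃ w ∈ unitary ℂ, w • U ∈ specialUnitaryGroup n ℂ := by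
  have hdet : U.det ∈ unitary ℂ := det_of_mem_unitary hU
  obtain ⟨w, hw, hw_pow⟩ : ∃ w ∈ unitary ℂ, w ^ Fintype.card n = star U.det := by
    rcases (Fintype.card n).eq_zero_or_pos with h | h
    · have : IsEmpty n := Fintype.card_eq_zero_iff.mp h
      exact ⟨1, one_mem _, by simp [det_isEmpty]⟩
    · obtain ⟨w, hw_pow⟩ := IsAlgClosed.exists_pow_nat_eq (star U.det) h
      refine ⟨w, Unitary.mem_iff_star_mul_self.mpr ?_, hw_pow⟩
      have hnorm : ‖w‖ ^ Fintype.card n = 1 := by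
        rw [← norm_pow, hw_pow, norm_star, CStarRing.norm_of_mem_unitary hdet]
      rw [Complex.star_def, Complex.conj_mul',
        (pow_eq_one_iff_of_nonneg (norm_nonneg w) h.ne').mp hnorm]
      simp
  refine ⟨w, hw, mem_specialUnitaryGroup_iff.mpr ⟨Unitary.smul_mem_of_mem hw hU, ?_⟩⟩
  rw [det_smul, hw_pow, Unitary.star_mul_self_of_mem hdet]

lemma commute_of_forall_specialUnitary_commute {Y : Matrix n n ℂ}
    (h : ∀ R ∈ specialUnitaryGroup n ℂ, Commute R Y) {U : Matrix n n ℂ}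
    (hU : U ∈ unitaryGroup n ℂ) : Commute U Y := by
  obtain ⟨w, hw, hwU⟩ := exists_smul_mem_specialUnitaryGroup hU
  have := (h _ hwU).smul_left (star w)
  rwa [smul_smul, Unitary.star_mul_self_of_mem hw, one_smul] at this

open scoped Matrix.Norms.L2Operator in
lemma commute_of_forall_unitary_commute {Y : Matrix n n ℂ}
    (h : ∀ U ∈ unitaryGroup n ℂ, Commute U Y) (M : Matrix n n ℂ) : Commute M Y := by
  have hspan : Submodule.span ℂ (unitaryGroup n ℂ : Set (Matrix n n ℂ)) ≤
      Subalgebra.toSubmodule (Subalgebra.centralizer ℂ {Y}) :=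
    Submodule.span_le.mpr fun U hU => Set.mem_centralizer_iff.mpr fun _ hY => by
      rw [Set.mem_singleton_iff.mp hY]
      exact (h U hU).symm.eq
  rw [CStarAlgebra.span_unitary] at hspan
  exact (Set.mem_centralizer_iff.mp (hspan (Submodule.mem_top (x := M))) Y rfl).symm

lemma mem_range_scalar_of_forall_specialUnitary_commute {Y : Matrix n n ℂ}
    (h : ∀ R ∈ specialUnitaryGroup n ℂ, Commute R Y) : Y ∈ Set.range (scalar n) :=
  mem_range_scalar_iff_commute_single'.mpr fun _ _ =>
    commute_of_forall_unitary_commute (fun _ => commute_of_forall_specialUnitary_commute h) _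

lemma Matrix.PosDef.exists_pos_eq_smul_one_of_mem_range_scalar {Y : Matrix n n ℂ}
    (hY : Y.PosDef) (h : Y ∈ Set.range (scalar n)) : ∃ c : ℝ, 0 < c ∧ Y = (c : ℂ) • 1 := by
  cases isEmpty_or_nonempty n
  · exact ⟨1, one_pos, Subsingleton.elim _ _⟩
  obtain ⟨c, rfl⟩ := h
  obtain ⟨i⟩ := ‹Nonempty n›
  obtain ⟨r, hr, rfl⟩ := RCLike.pos_iff_exists_ofReal.mp (by simpa using hY.diag_pos (i := i))
  exact ⟨r, hr, by simp [smul_one_eq_diagonal]⟩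

end Centralizer

theorem fixed_by_H_sigma_implies_multiple_complex_general (d : ℕ)
    (S X : Matrix (Fin d) (Fin d) ℂ) (hS : S.PosDef) (hX : X.PosDef)
    (hfix : ∀ R : Matrix (Fin d) (Fin d) ℂ, R * Rᴴ = 1 → R.det = 1 →
      (matSqrt S * R * (matSqrt S)⁻¹) * X * (matSqrt S * R * (matSqrt S)⁻¹)ᴴ = X) :
    ∃ c : ℝ, 0 < c ∧ X = (c : ℂ) • S := by
  set Q := matSqrt S
  have hQH : Q.IsHermitian := isHermitian_matSqrt hS.posSemidef
  have hQS : Q * Q = S := matSqrt_mul_self hS.posSemidef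
  have hdet : IsUnit Q.det := isUnit_of_mul_isUnit_left (x := Q.det) <| by
    rw [← det_mul, hQS]
    exact (isUnit_iff_isUnit_det S).mp hS.isUnit
  obtain ⟨Y, rfl⟩ : ∃ Y, X = Q * Y * Q := ⟨Q⁻¹ * X * Q⁻¹, by
    simp only [Matrix.mul_assoc, mul_nonsing_inv_cancel_left _ _ hdet, nonsing_inv_mul _ hdet,
      mul_one]⟩
  have hY : Y.PosDef := by
    rwa [← ((isUnit_iff_isUnit_det Q).mpr hdet).posDef_star_right_conjugate_iff,
      star_eq_conjTranspose, hQH.eq]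
  have hcomm : ∀ R ∈ specialUnitaryGroup (Fin d) ℂ, Commute R Y := fun R hR => by
    obtain ⟨hRU, hRdet⟩ := mem_specialUnitaryGroup_iff.mp hR
    exact hQH.commute_of_conj_by_similar_eq hdet hRU (hfix R (mem_unitaryGroup_iff.mp hRU) hRdet)
  obtain ⟨c, hc, rfl⟩ := hY.exists_pos_eq_smul_one_of_mem_range_scalar
    (mem_range_scalar_of_forall_specialUnitary_commute hcomm)
  exact ⟨c, hc, by rw [Matrix.mul_smul, Matrix.smul_mul, mul_one, hQS]⟩

/-- if a complex Hermitian positive definite `d × d` matrix `X` is fixed by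
the action `G · X = G X Gᴴ` of every element `G = Σ^{1/2} R Σ^{-1/2}` of `H_Σ`
(`R ∈ SU(d)`), then `X = c • Σ` for some real `c > 0`. -/
theorem fixed_by_H_sigma_implies_multiple_complex (d : ℕ) (hd : 1 ≤ d)
    (S X : Matrix (Fin d) (Fin d) ℂ) (hS : S.PosDef) (hX : X.PosDef)
    (hfix : ∀ R : Matrix (Fin d) (Fin d) ℂ, R * Rᴴ = 1 → R.det = 1 →
      (matSqrt S * R * (matSqrt S)⁻¹) * X * (matSqrt S * R * (matSqrt S)⁻¹)ᴴ = X) :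
    ∃ c : ℝ, 0 < c ∧ X = (c : ℂ) • S :=
  fixed_by_H_sigma_implies_multiple_complex_general d S X hS hX hfix
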